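/- Cakmak–Tiryaki variant of the Riedel–Sahoo theorem: Let a < b and let f : ℝ → ℝ be differentiable at every point of the closed interval [a, b]. Then there exists ξ ∈ (a, b) such that f(b) - f(ξ) = (b - ξ) * f'(ξ) + (1/2) * ((f'(b) - f'(a))/(b - a)) * (b - ξ)^2. -/

import Mathlib

/-!
Put `K = (f' b - f' a) / (b - a)`. Then `g x = f x - K x² / 2` satisfies `g' a = g' b`, and the
claim is Flett's mean value theorem `g b - g ξ = (b - ξ) g' ξ` at the right endpoint. For that,
the chord slope `h x = (g b - g x) / (b - x)` extends continuously to `b` by `g' b`, and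
`h' x = (h x - g' x) / (b - x)` vanishes exactly at the points we seek. Since `g' a = h b`, the
right derivative of `h` at `a` is `(h a - h b) / (b - a)`: either `h a = h b` and Rolle applies,
or `h` starts by moving away from `h b` and so has an interior extremum.
-/

open Set Function

section RightEndpointFlett

variable {h h' : ℝ → ℝ} {a b d : ℝ}

lemma IsMaxOn.nonpos_of_hasDerivWithinAt_Icc_left (hmax : IsMaxOn h (Icc a b) a) (hab : a < b)
    (hd : HasDerivWithinAt h d (Icc a b) a) : d ≤ 0 := by
  have hcone : b - a ∈ posTangentConeAt (Icc a b) a :=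
    sub_mem_posTangentConeAt_of_segment_subset (segment_eq_Icc hab.le ▸ Subset.rfl)
  have := hmax.localize.hasFDerivWithinAt_nonpos hd.hasFDerivWithinAt hcone
  rw [ContinuousLinearMap.toSpanSingleton_apply, smul_eq_mul] at this
  exact nonpos_of_mul_nonpos_right this (sub_pos.2 hab)

lemma exists_hasDerivAt_eq_zero_of_hasDerivWithinAt_left_pos (hab : a < b)
    (hc : ContinuousOn h (Icc a b)) (hd : ∀ x ∈ Ioo a b, HasDerivAt h (h' x) x)
    (ha : HasDerivWithinAt h d (Icc a b) a) (hd0 : 0 < d) (hba : h b ≤ h a) :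
    ∃ ξ ∈ Ioo a b, h' ξ = 0 := by
  obtain ⟨c, hcI, hmax⟩ := isCompact_Icc.exists_isMaxOn (nonempty_Icc.2 hab.le) hc
  have ha_not_max : ¬ IsMaxOn h (Icc a b) a := fun hm =>
    (hm.nonpos_of_hasDerivWithinAt_Icc_left hab ha).not_gt hd0
  have hca : c ≠ a := by rintro rfl; exact ha_not_max hmax
  have hcb : c ≠ b := by rintro rfl; exact ha_not_max fun x hx => (hmax hx).trans hba
  have hcI' : c ∈ Ioo a b := ⟨lt_of_le_of_ne hcI.1 hca.symm, lt_of_le_of_ne hcI.2 hcb⟩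
  exact ⟨c, hcI', (hmax.isLocalMax (Icc_mem_nhds hcI'.1 hcI'.2)).hasDerivAt_eq_zero (hd c hcI')⟩

/-- Rolle's theorem with `h a = h b` weakened: it suffices that the right derivative at `a`
points away from `h b`. -/
theorem exists_hasDerivAt_eq_zero_of_hasDerivWithinAt_left (hab : a < b)
    (hc : ContinuousOn h (Icc a b)) (hd : ∀ x ∈ Ioo a b, HasDerivAt h (h' x) x)
    (ha : HasDerivWithinAt h d (Icc a b) a) (hsign : 0 < d * (h a - h b) ∨ h a = h b) :
    ∃ ξ ∈ Ioo a b, h' ξ = 0 := by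
  rcases hsign with hpos | heq
  · rcases pos_and_pos_or_neg_and_neg_of_mul_pos hpos with ⟨hd0, hba⟩ | ⟨hd0, hba⟩
    · exact exists_hasDerivAt_eq_zero_of_hasDerivWithinAt_left_pos hab hc hd ha hd0
        (sub_pos.1 hba).le
    · obtain ⟨ξ, hξ, h0⟩ := exists_hasDerivAt_eq_zero_of_hasDerivWithinAt_left_pos hab hc.neg
        (fun x hx => (hd x hx).neg) ha.neg (neg_pos.2 hd0) (neg_le_neg (sub_neg.1 hba).le)
      exact ⟨ξ, hξ, neg_eq_zero.1 h0⟩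
  · exact exists_hasDerivAt_eq_zero hab hc heq hd

lemma HasDerivWithinAt.update_slope {g : ℝ → ℝ} {s : Set ℝ} {c x y : ℝ}
    (hg : HasDerivWithinAt g c s x) (hxb : x ≠ b) :
    HasDerivWithinAt (update (slope g b) b y) ((c * (x - b) - (g x - g b)) / (x - b) ^ 2) s x := by
  have hdiv : HasDerivWithinAt (slope g b) ((c * (x - b) - (g x - g b)) / (x - b) ^ 2) s x := by
    rw [slope_fun_def_field]
    exact (hg.sub_const (g b)).div ((hasDerivWithinAt_id x s).sub_const b) (sub_ne_zero.2 hxb)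
      |>.congr_deriv (by simp)
  refine hdiv.congr_of_eventuallyEq ?_ (update_of_ne hxb _ _)
  filter_upwards [nhdsWithin_le_nhds (eventually_ne_nhds hxb)] with z hz
  exact update_of_ne hz _ _

theorem exists_sub_eq_mul_deriv_of_deriv_eq {g g' : ℝ → ℝ} (hab : a < b)
    (hg : ∀ x ∈ Icc a b, HasDerivWithinAt g (g' x) (Icc a b) x) (heq : g' a = g' b) :
    ∃ ξ ∈ Ioo a b, g b - g ξ = (b - ξ) * g' ξ := by
  set h := update (slope g b) b (g' b)
  set h' : ℝ → ℝ := fun x => (g' x * (x - b) - (g x - g b)) / (x - b) ^ 2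
  have hderivWithin : ∀ x ∈ Ico a b, HasDerivWithinAt h (h' x) (Icc a b) x := fun x hx =>
    (hg x (Ico_subset_Icc_self hx)).update_slope hx.2.ne
  have hcont : ContinuousOn h (Icc a b) := by
    intro x hx
    rcases hx.2.lt_or_eq with hxb | rfl
    · exact (hderivWithin x ⟨hx.1, hxb⟩).continuousWithinAt
    · exact continuousWithinAt_update_same.2
        (hasDerivWithinAt_iff_tendsto_slope.1 (hg x (right_mem_Icc.2 hab.le)))
  have hderiv : ∀ x ∈ Ioo a b, HasDerivAt h (h' x) x := fun x hx =>
    (hderivWithin x (Ioo_subset_Ico_self hx)).hasDerivAt (Icc_mem_nhds hx.1 hx.2)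
  have hsign : 0 < h' a * (h a - h b) ∨ h a = h b := by
    have hb : h b = g' a := by rw [heq]; exact update_self ..
    have hda : h' a = (h a - g' a) / (b - a) := by
      have hab' : a - b ≠ 0 := sub_ne_zero.2 hab.ne
      have hba : b - a ≠ 0 := sub_ne_zero.2 hab.ne'
      simp only [h, h', update_of_ne hab.ne, slope_def_field]
      field_simp
      ring
    rcases eq_or_ne (h a) (h b) with he | hne
    · exact Or.inr he
    · have hprod : h' a * (h a - h b) = (h a - h b) ^ 2 / (b - a) := by
        rw [hda, hb]
        ring
      exact Or.inl (hprod ▸ div_pos (sq_pos_of_ne_zero (sub_ne_zero.2 hne)) (sub_pos.2 hab))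
  obtain ⟨ξ, hξ, h0⟩ := exists_hasDerivAt_eq_zero_of_hasDerivWithinAt_left hab hcont hderiv
    (hderivWithin a (left_mem_Ico.2 hab)) hsign
  refine ⟨ξ, hξ, ?_⟩
  rw [div_eq_zero_iff, or_iff_left (pow_ne_zero 2 (sub_ne_zero.2 hξ.2.ne))] at h0
  linarith

end RightEndpointFlett

/-- Cakmak–Tiryaki variant of the Riedel–Sahoo theorem. -/
theorem cakmak_tiryaki (f f' : ℝ → ℝ) (a b : ℝ) (hab : a < b)
    (hf : ∀ x ∈ Set.Icc a b, HasDerivWithinAt f (f' x) (Set.Icc a b) x) :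
    ∃ ξ ∈ Set.Ioo a b,
      f b - f ξ = (b - ξ) * f' ξ + (1 / 2) * ((f' b - f' a) / (b - a)) * (b - ξ) ^ 2 := by
  set K := (f' b - f' a) / (b - a)
  have hg : ∀ x ∈ Icc a b,
      HasDerivWithinAt (fun y => f y - K / 2 * y ^ 2) (f' x - K * x) (Icc a b) x := fun x hx =>
    (hf x hx).sub (((hasDerivAt_pow 2 x).const_mul (K / 2)).hasDerivWithinAt.congr_deriv (by ring))
  have heq : f' a - K * a = f' b - K * b := by
    have : K * (b - a) = f' b - f' a := div_mul_cancel₀ _ (sub_ne_zero.2 hab.ne')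
    linear_combination this
  obtain ⟨ξ, hξ, hflett⟩ := exists_sub_eq_mul_deriv_of_deriv_eq hab hg heq
  exact ⟨ξ, hξ, by linear_combination hflett⟩
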